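/- For k = 0, 1, 2 let θ_k = 2kπ/3 and u_k = (sin θ_k, −cos θ_k) ∈ ℝ². Then for every r > 0, the set {x ∈ ℝ² : Σ_{k=0}^{2} max(0, ⟨x, u_k⟩) ≤ 4r} equals the regular hexagon given by the convex hull of the six points (8√3/3)·r·(cos(jπ/3), sin(jπ/3)) for j = 0, 1, …, 5; in particular, it is the smallest regular hexagon (in this orientation) containing the closed Euclidean disk of radius 4r centered at the origin. -/

import Mathlib

noncomputable section

open Real

/-- The unit vector `u_k = (sin θ_k, −cos θ_k)` with `θ_k = 2kπ/3`, for `k = 0, 1, 2`. -/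
def uExt (k : ℕ) : ℝ × ℝ :=
  (Real.sin (2 * k * π / 3), -Real.cos (2 * k * π / 3))

/-- The standard inner product of `ℝ²`. -/
def dot2 (x u : ℝ × ℝ) : ℝ := x.1 * u.1 + x.2 * u.2

/-- The six vertices `(8√3/3)·r·(cos(jπ/3), sin(jπ/3))`, `j = 0, …, 5`, of the regular
hexagon circumscribing the Euclidean disk of radius `4r`. -/
def hexVertex (r : ℝ) (j : Fin 6) : ℝ × ℝ :=
  ((8 * Real.sqrt 3 / 3) * r * Real.cos ((j : ℝ) * π / 3),
    (8 * Real.sqrt 3 / 3) * r * Real.sin ((j : ℝ) * π / 3))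

lemma uExt0 : uExt 0 = (0, -1) := by simp [uExt]

lemma uExt1 : uExt 1 = (Real.sqrt 3 / 2, 1/2) := by
  unfold uExt
  rw [show (2 * (1:ℕ) * π / 3 : ℝ) = π - π/3 by push_cast; ring,
    Real.sin_pi_sub, Real.cos_pi_sub, Real.sin_pi_div_three, Real.cos_pi_div_three]
  norm_num

lemma uExt2 : uExt 2 = (-(Real.sqrt 3 / 2), 1/2) := by
  unfold uExt
  rw [show (2 * (2:ℕ) * π / 3 : ℝ) = π/3 + π by push_cast; ring,
    Real.sin_add_pi, Real.cos_add_pi, Real.sin_pi_div_three, Real.cos_pi_div_three]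
  norm_num

lemma sumS (x : ℝ × ℝ) :
    ∑ k ∈ Finset.range 3, max 0 (dot2 x (uExt k)) =
      max 0 (-x.2) + max 0 (Real.sqrt 3 / 2 * x.1 + x.2 / 2)
        + max 0 (-(Real.sqrt 3 / 2 * x.1) + x.2 / 2) := by
  have d0 : dot2 x (uExt 0) = -x.2 := by rw [uExt0]; simp [dot2]
  have d1 : dot2 x (uExt 1) = Real.sqrt 3 / 2 * x.1 + x.2 / 2 := by rw [uExt1]; simp [dot2]; ring
  have d2 : dot2 x (uExt 2) = -(Real.sqrt 3 / 2 * x.1) + x.2 / 2 := by rw [uExt2]; simp [dot2]; ring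
  rw [Finset.sum_range_succ, Finset.sum_range_succ, Finset.sum_range_one, d0, d1, d2]

lemma hv0 (r : ℝ) : hexVertex r 0 = (8 * Real.sqrt 3 / 3 * r, 0) := by
  simp [hexVertex]

lemma hv1 (r : ℝ) : hexVertex r 1 = (8 * Real.sqrt 3 / 3 * r / 2, 4 * r) := by
  have h3 : Real.sqrt 3 * Real.sqrt 3 = 3 := Real.mul_self_sqrt (by norm_num)
  unfold hexVertex
  rw [show (((1 : Fin 6) : ℝ)) = ((1:ℕ):ℝ) from rfl,
    show (((1:ℕ):ℝ) * π / 3) = π/3 by push_cast; ring,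
    Real.sin_pi_div_three, Real.cos_pi_div_three, Prod.mk.injEq]
  exact ⟨by ring, by linear_combination (4*r/3) * h3⟩

lemma hv2 (r : ℝ) : hexVertex r 2 = (-(8 * Real.sqrt 3 / 3 * r / 2), 4 * r) := by
  have h3 : Real.sqrt 3 * Real.sqrt 3 = 3 := Real.mul_self_sqrt (by norm_num)
  unfold hexVertex
  rw [show (((2 : Fin 6) : ℝ)) = ((2:ℕ):ℝ) from rfl,
    show (((2:ℕ):ℝ) * π / 3) = π - π/3 by push_cast; ring,
    Real.sin_pi_sub, Real.cos_pi_sub, Real.sin_pi_div_three, Real.cos_pi_div_three, Prod.mk.injEq]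
  exact ⟨by ring, by linear_combination (4*r/3) * h3⟩

lemma hv3 (r : ℝ) : hexVertex r 3 = (-(8 * Real.sqrt 3 / 3 * r), 0) := by
  unfold hexVertex
  rw [show (((3 : Fin 6) : ℝ)) = ((3:ℕ):ℝ) from rfl,
    show (((3:ℕ):ℝ) * π / 3) = π by push_cast; ring,
    Real.sin_pi, Real.cos_pi, Prod.mk.injEq]
  constructor <;> ring

lemma hv4 (r : ℝ) : hexVertex r 4 = (-(8 * Real.sqrt 3 / 3 * r / 2), -(4 * r)) := by
  have h3 : Real.sqrt 3 * Real.sqrt 3 = 3 := Real.mul_self_sqrt (by norm_num)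
  unfold hexVertex
  rw [show (((4 : Fin 6) : ℝ)) = ((4:ℕ):ℝ) from rfl,
    show (((4:ℕ):ℝ) * π / 3) = π/3 + π by push_cast; ring,
    Real.sin_add_pi, Real.cos_add_pi, Real.sin_pi_div_three, Real.cos_pi_div_three, Prod.mk.injEq]
  exact ⟨by ring, by linear_combination (-(4*r/3)) * h3⟩

lemma hv5 (r : ℝ) : hexVertex r 5 = (8 * Real.sqrt 3 / 3 * r / 2, -(4 * r)) := by
  have h3 : Real.sqrt 3 * Real.sqrt 3 = 3 := Real.mul_self_sqrt (by norm_num)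
  unfold hexVertex
  rw [show (((5 : Fin 6) : ℝ)) = ((5:ℕ):ℝ) from rfl,
    show (((5:ℕ):ℝ) * π / 3) = 2*π - π/3 by push_cast; ring,
    Real.sin_two_pi_sub, Real.cos_two_pi_sub, Real.sin_pi_div_three, Real.cos_pi_div_three,
    Prod.mk.injEq]
  exact ⟨by ring, by linear_combination (-(4*r/3)) * h3⟩

lemma max_comb (a b u v : ℝ) (ha : 0 ≤ a) (hb : 0 ≤ b) :
    max 0 (a * u + b * v) ≤ a * max 0 u + b * max 0 v := by
  refine max_le (by positivity) (add_le_add ?_ ?_)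
  · exact mul_le_mul_of_nonneg_left (le_max_right _ _) ha
  · exact mul_le_mul_of_nonneg_left (le_max_right _ _) hb

lemma trapezoid_mem (R h : ℝ) (s : Set (ℝ × ℝ)) (hR : 0 < R) (hh : 0 < h)
    (hm3 : ((-R, 0) : ℝ × ℝ) ∈ s) (hm0 : ((R, 0) : ℝ × ℝ) ∈ s)
    (hm2 : ((-(R/2), h) : ℝ × ℝ) ∈ s) (hm1 : ((R/2, h) : ℝ × ℝ) ∈ s)
    (p : ℝ × ℝ) (hy0 : 0 ≤ p.2) (hy1 : p.2 ≤ h)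
    (hxu : 2*h*p.1 ≤ R*(2*h - p.2)) (hxl : -(R*(2*h - p.2)) ≤ 2*h*p.1) :
    p ∈ convexHull ℝ s := by
  have hD : (0:ℝ) < 2*h - p.2 := by linarith
  have hDne : (2*h - p.2) ≠ 0 := ne_of_gt hD
  have hRne : R ≠ 0 := ne_of_gt hR
  have hhne : h ≠ 0 := ne_of_gt hh
  have hDne2 : h * 2 - p.2 ≠ 0 := by intro e; apply hDne; linarith
  have hxbu : 2*h*p.1/(2*h - p.2) ≤ R := by rw [div_le_iff₀ hD]; linarith
  have hxbl : -R ≤ 2*h*p.1/(2*h - p.2) := by rw [le_div_iff₀ hD]; linarith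
  have hbseg : ((2*h*p.1/(2*h - p.2), 0) : ℝ × ℝ) ∈ segment ℝ ((-R, 0) : ℝ × ℝ) ((R, 0) : ℝ × ℝ) := by
    refine ⟨(R - 2*h*p.1/(2*h - p.2))/(2*R), (R + 2*h*p.1/(2*h - p.2))/(2*R),
      div_nonneg (by linarith) (by linarith), div_nonneg (by linarith) (by linarith),
      by field_simp; ring, ?_⟩
    rw [Prod.smul_mk, Prod.smul_mk, Prod.mk_add_mk, Prod.mk.injEq]
    constructor
    · simp only [smul_eq_mul]
      field_simp
      ring
    · simp
  have hqseg : ((h*p.1/(2*h - p.2), h) : ℝ × ℝ) ∈ segment ℝ ((-(R/2), h) : ℝ × ℝ) ((R/2, h) : ℝ × ℝ) := by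
    refine ⟨(R - 2*h*p.1/(2*h - p.2))/(2*R), (R + 2*h*p.1/(2*h - p.2))/(2*R),
      div_nonneg (by linarith) (by linarith), div_nonneg (by linarith) (by linarith),
      by field_simp; ring, ?_⟩
    rw [Prod.smul_mk, Prod.smul_mk, Prod.mk_add_mk, Prod.mk.injEq]
    constructor
    · simp only [smul_eq_mul]
      field_simp
      ring
    · simp only [smul_eq_mul]
      field_simp
      ring
  have hb := segment_subset_convexHull hm3 hm0 hbseg
  have hq := segment_subset_convexHull hm2 hm1 hqseg
  have hpseg : p ∈ segment ℝ ((2*h*p.1/(2*h - p.2), 0) : ℝ × ℝ) ((h*p.1/(2*h - p.2), h) : ℝ × ℝ) := by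
    refine ⟨1 - p.2/h, p.2/h, by
      have : p.2/h ≤ 1 := by rw [div_le_one hh]; linarith
      linarith, div_nonneg hy0 hh.le, by ring, ?_⟩
    rw [Prod.smul_mk, Prod.smul_mk, Prod.mk_add_mk]
    have e1 : (1 - p.2/h) * (2*h*p.1/(2*h - p.2)) + p.2/h * (h*p.1/(2*h - p.2)) = p.1 := by
      field_simp
      ring
    have e2 : (1 - p.2/h) * 0 + p.2/h * h = p.2 := by field_simp; ring
    simp only [smul_eq_mul]
    rw [e1, e2]
  exact (convex_convexHull ℝ s).segment_subset hb hq hpseg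

lemma trapezoid_mem_neg (R h : ℝ) (s : Set (ℝ × ℝ)) (hR : 0 < R) (hh : 0 < h)
    (hm3 : ((-R, 0) : ℝ × ℝ) ∈ s) (hm0 : ((R, 0) : ℝ × ℝ) ∈ s)
    (hm4 : ((-(R/2), -h) : ℝ × ℝ) ∈ s) (hm5 : ((R/2, -h) : ℝ × ℝ) ∈ s)
    (p : ℝ × ℝ) (hy0 : -h ≤ p.2) (hy1 : p.2 ≤ 0)
    (hxu : 2*h*p.1 ≤ R*(2*h + p.2)) (hxl : -(R*(2*h + p.2)) ≤ 2*h*p.1) :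
    p ∈ convexHull ℝ s := by
  have hD : (0:ℝ) < 2*h + p.2 := by linarith
  have hDne : (2*h + p.2) ≠ 0 := ne_of_gt hD
  have hRne : R ≠ 0 := ne_of_gt hR
  have hhne : h ≠ 0 := ne_of_gt hh
  have hDne2 : h * 2 + p.2 ≠ 0 := by intro e; apply hDne; linarith
  have hxbu : 2*h*p.1/(2*h + p.2) ≤ R := by rw [div_le_iff₀ hD]; linarith
  have hxbl : -R ≤ 2*h*p.1/(2*h + p.2) := by rw [le_div_iff₀ hD]; linarith
  have hbseg : ((2*h*p.1/(2*h + p.2), 0) : ℝ × ℝ) ∈ segment ℝ ((-R, 0) : ℝ × ℝ) ((R, 0) : ℝ × ℝ) := by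
    refine ⟨(R - 2*h*p.1/(2*h + p.2))/(2*R), (R + 2*h*p.1/(2*h + p.2))/(2*R),
      div_nonneg (by linarith) (by linarith), div_nonneg (by linarith) (by linarith),
      by field_simp; ring, ?_⟩
    rw [Prod.smul_mk, Prod.smul_mk, Prod.mk_add_mk, Prod.mk.injEq]
    constructor
    · simp only [smul_eq_mul]
      field_simp
      ring
    · simp
  have hqseg : ((h*p.1/(2*h + p.2), -h) : ℝ × ℝ) ∈ segment ℝ ((-(R/2), -h) : ℝ × ℝ) ((R/2, -h) : ℝ × ℝ) := by
    refine ⟨(R - 2*h*p.1/(2*h + p.2))/(2*R), (R + 2*h*p.1/(2*h + p.2))/(2*R),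
      div_nonneg (by linarith) (by linarith), div_nonneg (by linarith) (by linarith),
      by field_simp; ring, ?_⟩
    rw [Prod.smul_mk, Prod.smul_mk, Prod.mk_add_mk, Prod.mk.injEq]
    constructor
    · simp only [smul_eq_mul]
      field_simp
      ring
    · simp only [smul_eq_mul]
      field_simp
      ring
  have hb := segment_subset_convexHull hm3 hm0 hbseg
  have hq := segment_subset_convexHull hm4 hm5 hqseg
  have hpseg : p ∈ segment ℝ ((2*h*p.1/(2*h + p.2), 0) : ℝ × ℝ) ((h*p.1/(2*h + p.2), -h) : ℝ × ℝ) := by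
    refine ⟨1 - (-p.2)/h, (-p.2)/h, by
      have : (-p.2)/h ≤ 1 := by rw [div_le_one hh]; linarith
      linarith, div_nonneg (by linarith) hh.le, by ring, ?_⟩
    rw [Prod.smul_mk, Prod.smul_mk, Prod.mk_add_mk]
    have e1 : (1 - (-p.2)/h) * (2*h*p.1/(2*h + p.2)) + (-p.2)/h * (h*p.1/(2*h + p.2)) = p.1 := by
      field_simp
      ring
    have e2 : (1 - (-p.2)/h) * 0 + (-p.2)/h * (-h) = p.2 := by field_simp; ring
    simp only [smul_eq_mul]
    rw [e1, e2]
  exact (convex_convexHull ℝ s).segment_subset hb hq hpseg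

set_option maxHeartbeats 2000000 in
/-- **The extremal ball is a regular hexagon** (Section 11 of the paper): for every
`r > 0`, the set `{x ∈ ℝ² : ∑ₖ max(0, ⟨x, u_k⟩) ≤ 4r}` equals the convex hull of the six
points `(8√3/3)·r·(cos(jπ/3), sin(jπ/3))`, `j = 0, …, 5`; in particular it contains the
closed Euclidean disk of radius `4r` centered at the origin. -/
theorem extremal_ball_eq_hexagon (r : ℝ) (hr : 0 < r) :
    {x : ℝ × ℝ | ∑ k ∈ Finset.range 3, max 0 (dot2 x (uExt k)) ≤ 4 * r} =
        convexHull ℝ (Set.range (hexVertex r)) ∧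
      {x : ℝ × ℝ | x.1 ^ 2 + x.2 ^ 2 ≤ (4 * r) ^ 2} ⊆
        {x : ℝ × ℝ | ∑ k ∈ Finset.range 3, max 0 (dot2 x (uExt k)) ≤ 4 * r} := by
  have hsq : Real.sqrt 3 * Real.sqrt 3 = 3 := Real.mul_self_sqrt (by norm_num)
  have hsqr : Real.sqrt 3 * Real.sqrt 3 * r = 3 * r := by rw [hsq]
  have hs3 : (0:ℝ) ≤ Real.sqrt 3 := Real.sqrt_nonneg 3
  -- the vertices belong to the sublevel set
  have hsub : Set.range (hexVertex r) ⊆ {x : ℝ × ℝ | max 0 (-x.2)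
      + max 0 (Real.sqrt 3 / 2 * x.1 + x.2 / 2)
      + max 0 (-(Real.sqrt 3 / 2 * x.1) + x.2 / 2) ≤ 4 * r} := by
    rintro q ⟨j, rfl⟩
    fin_cases j
    · rw [show (⟨0, by omega⟩ : Fin 6) = (0 : Fin 6) from rfl]
      simp only [Set.mem_setOf_eq, hv0]
      rw [max_eq_left (by linarith : -(0:ℝ) ≤ 0),
        max_eq_right (by nlinarith : (0:ℝ) ≤ Real.sqrt 3 / 2 * (8 * Real.sqrt 3 / 3 * r) + 0/2),
        max_eq_left (by nlinarith : -(Real.sqrt 3 / 2 * (8 * Real.sqrt 3 / 3 * r)) + 0/2 ≤ 0)]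
      linarith [hsqr]
    · rw [show (⟨1, by omega⟩ : Fin 6) = (1 : Fin 6) from rfl]
      simp only [Set.mem_setOf_eq, hv1]
      rw [max_eq_left (by linarith : -(4*r) ≤ 0),
        max_eq_right (by nlinarith : (0:ℝ) ≤ Real.sqrt 3 / 2 * (8 * Real.sqrt 3 / 3 * r / 2) + 4*r/2),
        max_eq_left (by nlinarith : -(Real.sqrt 3 / 2 * (8 * Real.sqrt 3 / 3 * r / 2)) + 4*r/2 ≤ 0)]
      linarith [hsqr]
    · rw [show (⟨2, by omega⟩ : Fin 6) = (2 : Fin 6) from rfl]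
      simp only [Set.mem_setOf_eq, hv2]
      rw [max_eq_left (by linarith : -(4*r) ≤ 0),
        max_eq_left (by nlinarith : Real.sqrt 3 / 2 * -(8 * Real.sqrt 3 / 3 * r / 2) + 4*r/2 ≤ 0),
        max_eq_right (by nlinarith : (0:ℝ) ≤ -(Real.sqrt 3 / 2 * -(8 * Real.sqrt 3 / 3 * r / 2)) + 4*r/2)]
      linarith [hsqr]
    · rw [show (⟨3, by omega⟩ : Fin 6) = (3 : Fin 6) from rfl]
      simp only [Set.mem_setOf_eq, hv3]
      rw [max_eq_left (by linarith : -(0:ℝ) ≤ 0),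
        max_eq_left (by nlinarith : Real.sqrt 3 / 2 * -(8 * Real.sqrt 3 / 3 * r) + 0/2 ≤ 0),
        max_eq_right (by nlinarith : (0:ℝ) ≤ -(Real.sqrt 3 / 2 * -(8 * Real.sqrt 3 / 3 * r)) + 0/2)]
      linarith [hsqr]
    · rw [show (⟨4, by omega⟩ : Fin 6) = (4 : Fin 6) from rfl]
      simp only [Set.mem_setOf_eq, hv4]
      rw [max_eq_right (by linarith : (0:ℝ) ≤ -(-(4*r))),
        max_eq_left (by nlinarith : Real.sqrt 3 / 2 * -(8 * Real.sqrt 3 / 3 * r / 2) + -(4*r)/2 ≤ 0),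
        max_eq_left (by nlinarith : -(Real.sqrt 3 / 2 * -(8 * Real.sqrt 3 / 3 * r / 2)) + -(4*r)/2 ≤ 0)]
      linarith [hsqr]
    · rw [show (⟨5, by omega⟩ : Fin 6) = (5 : Fin 6) from rfl]
      simp only [Set.mem_setOf_eq, hv5]
      rw [max_eq_right (by linarith : (0:ℝ) ≤ -(-(4*r))),
        max_eq_left (by nlinarith : Real.sqrt 3 / 2 * (8 * Real.sqrt 3 / 3 * r / 2) + -(4*r)/2 ≤ 0),
        max_eq_left (by nlinarith : -(Real.sqrt 3 / 2 * (8 * Real.sqrt 3 / 3 * r / 2)) + -(4*r)/2 ≤ 0)]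
      linarith [hsqr]
  -- the sublevel set is convex
  have hconv : Convex ℝ {x : ℝ × ℝ | max 0 (-x.2)
      + max 0 (Real.sqrt 3 / 2 * x.1 + x.2 / 2)
      + max 0 (-(Real.sqrt 3 / 2 * x.1) + x.2 / 2) ≤ 4 * r} := by
    intro x hx y hy a b ha hb hab
    simp only [Set.mem_setOf_eq] at hx hy ⊢
    have c1 : (a • x + b • y).1 = a * x.1 + b * y.1 := rfl
    have c2 : (a • x + b • y).2 = a * x.2 + b * y.2 := rfl
    rw [c1, c2]
    have t1 : max 0 (-(a*x.2 + b*y.2)) ≤ a * max 0 (-x.2) + b * max 0 (-y.2) := by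
      rw [show -(a*x.2+b*y.2) = a*(-x.2) + b*(-y.2) by ring]
      exact max_comb _ _ _ _ ha hb
    have t2 : max 0 (Real.sqrt 3/2*(a*x.1+b*y.1) + (a*x.2+b*y.2)/2)
        ≤ a * max 0 (Real.sqrt 3/2*x.1 + x.2/2) + b * max 0 (Real.sqrt 3/2*y.1 + y.2/2) := by
      rw [show Real.sqrt 3/2*(a*x.1+b*y.1) + (a*x.2+b*y.2)/2
          = a*(Real.sqrt 3/2*x.1 + x.2/2) + b*(Real.sqrt 3/2*y.1+y.2/2) by ring]
      exact max_comb _ _ _ _ ha hb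
    have t3 : max 0 (-(Real.sqrt 3/2*(a*x.1+b*y.1)) + (a*x.2+b*y.2)/2)
        ≤ a * max 0 (-(Real.sqrt 3/2*x.1) + x.2/2) + b * max 0 (-(Real.sqrt 3/2*y.1) + y.2/2) := by
      rw [show -(Real.sqrt 3/2*(a*x.1+b*y.1)) + (a*x.2+b*y.2)/2
          = a*(-(Real.sqrt 3/2*x.1) + x.2/2) + b*(-(Real.sqrt 3/2*y.1)+y.2/2) by ring]
      exact max_comb _ _ _ _ ha hb
    have hax := mul_le_mul_of_nonneg_left hx ha
    have hby := mul_le_mul_of_nonneg_left hy hb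
    have hsum : a*(4*r) + b*(4*r) = 4*r := by rw [show a*(4*r) + b*(4*r) = (a+b)*(4*r) by ring, hab, one_mul]
    nlinarith [t1, t2, t3, hax, hby]
  constructor
  · ext p
    simp only [Set.mem_setOf_eq, sumS]
    constructor
    · intro hp
      have hA1 := le_max_left (0:ℝ) (-p.2)
      have hA2 := le_max_right (0:ℝ) (-p.2)
      have hB1 := le_max_left (0:ℝ) (Real.sqrt 3 / 2 * p.1 + p.2 / 2)
      have hB2 := le_max_right (0:ℝ) (Real.sqrt 3 / 2 * p.1 + p.2 / 2)
      have hC1 := le_max_left (0:ℝ) (-(Real.sqrt 3 / 2 * p.1) + p.2 / 2)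
      have hC2 := le_max_right (0:ℝ) (-(Real.sqrt 3 / 2 * p.1) + p.2 / 2)
      have h1 : p.2 ≤ 4*r := by linarith
      have h2 : -p.2 ≤ 4*r := by linarith
      have h3 : Real.sqrt 3 * p.1 + p.2 ≤ 8*r := by linarith
      have h4 : -(Real.sqrt 3 * p.1) + p.2 ≤ 8*r := by linarith
      have h5 : Real.sqrt 3 * p.1 - p.2 ≤ 8*r := by linarith
      have h6 : -(Real.sqrt 3 * p.1) - p.2 ≤ 8*r := by linarith
      have hRpos : (0:ℝ) < 8*Real.sqrt 3/3*r := by positivity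
      have e' : Real.sqrt 3 * Real.sqrt 3 * (p.1 * r) = 3 * (p.1 * r) := by rw [hsq]
      have m0 : ((8*Real.sqrt 3/3*r, 0) : ℝ × ℝ) ∈ Set.range (hexVertex r) := ⟨0, hv0 r⟩
      have m1 : ((8*Real.sqrt 3/3*r/2, 4*r) : ℝ × ℝ) ∈ Set.range (hexVertex r) := ⟨1, hv1 r⟩
      have m2 : ((-(8*Real.sqrt 3/3*r/2), 4*r) : ℝ × ℝ) ∈ Set.range (hexVertex r) := ⟨2, hv2 r⟩
      have m3 : ((-(8*Real.sqrt 3/3*r), 0) : ℝ × ℝ) ∈ Set.range (hexVertex r) := ⟨3, hv3 r⟩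
      have m4 : ((-(8*Real.sqrt 3/3*r/2), -(4*r)) : ℝ × ℝ) ∈ Set.range (hexVertex r) := ⟨4, hv4 r⟩
      have m5 : ((8*Real.sqrt 3/3*r/2, -(4*r)) : ℝ × ℝ) ∈ Set.range (hexVertex r) := ⟨5, hv5 r⟩
      rcases le_total 0 p.2 with hy|hy
      · refine trapezoid_mem (8*Real.sqrt 3/3*r) (4*r) _ hRpos (by positivity)
          m3 m0 m2 m1 p hy h1 ?_ ?_
        · have hmul := mul_le_mul_of_nonneg_left
            (show Real.sqrt 3 * p.1 ≤ 8*r - p.2 by linarith) hRpos.le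
          nlinarith [hmul, e']
        · have hmul := mul_le_mul_of_nonneg_left
            (show -(Real.sqrt 3 * p.1) ≤ 8*r - p.2 by linarith) hRpos.le
          nlinarith [hmul, e']
      · refine trapezoid_mem_neg (8*Real.sqrt 3/3*r) (4*r) _ hRpos (by positivity)
          m3 m0 m4 m5 p (by linarith) hy ?_ ?_
        · have hmul := mul_le_mul_of_nonneg_left
            (show Real.sqrt 3 * p.1 ≤ 8*r + p.2 by linarith) hRpos.le
          nlinarith [hmul, e']
        · have hmul := mul_le_mul_of_nonneg_left
            (show -(Real.sqrt 3 * p.1) ≤ 8*r + p.2 by linarith) hRpos.le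
          nlinarith [hmul, e']
    · intro hp
      exact convexHull_min hsub hconv hp
  · intro p hp
    simp only [Set.mem_setOf_eq] at hp ⊢
    rw [sumS]
    have key1 : Real.sqrt 3 * p.1 + p.2 ≤ 8*r := by
      nlinarith [hp, hr, hsq, sq_nonneg (p.1 - Real.sqrt 3*p.2), sq_nonneg p.1, sq_nonneg p.2, hs3]
    have key2 : -(Real.sqrt 3 * p.1) + p.2 ≤ 8*r := by
      nlinarith [hp, hr, hsq, sq_nonneg (p.1 + Real.sqrt 3*p.2), sq_nonneg p.1, sq_nonneg p.2, hs3]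
    have key3 : Real.sqrt 3 * p.1 - p.2 ≤ 8*r := by
      nlinarith [hp, hr, hsq, sq_nonneg (p.1 + Real.sqrt 3*p.2), sq_nonneg p.1, sq_nonneg p.2, hs3]
    have key4 : -(Real.sqrt 3 * p.1) - p.2 ≤ 8*r := by
      nlinarith [hp, hr, hsq, sq_nonneg (p.1 - Real.sqrt 3*p.2), sq_nonneg p.1, sq_nonneg p.2, hs3]
    have key5 : p.2 ≤ 4*r := by nlinarith [hp, hr, sq_nonneg p.1]
    have key6 : -p.2 ≤ 4*r := by nlinarith [hp, hr, sq_nonneg p.1]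
    rcases max_cases (0:ℝ) (-p.2) with ⟨e1,l1⟩|⟨e1,l1⟩ <;>
      rcases max_cases (0:ℝ) (Real.sqrt 3/2*p.1 + p.2/2) with ⟨e2,l2⟩|⟨e2,l2⟩ <;>
      rcases max_cases (0:ℝ) (-(Real.sqrt 3/2*p.1) + p.2/2) with ⟨e3,l3⟩|⟨e3,l3⟩ <;>
      rw [e1, e2, e3] <;>
      linarith [key1, key2, key3, key4, key5, key6, hr]
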